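/- arXiv:2401.16358 — 2 statements merged into one kernel-verified Lean document; each statement's English description precedes it below -/
import Mathlib

section
/- Assume (0 :_M I) = 0. Let p be a prime ideal of R with I ⊆ p and p ∈ Ass_R(M / I^n N) for all sufficiently large n. Then there exist a ∈ {d_1, …, d_c} and b ∈ ℤ such that v_p(M / I^n N) = a·n + b for all sufficiently large n. -/
/-!
Work in `M[t]` as a module over `A = R[X_1, …, X_c]`, with `X_j` acting as `y_j t`; it is
bigraded by the power of `t` and the grading of `M`. As `J` is a reduction of `I`, the Rees module
`⨁ Iⁿ N tⁿ` is finitely generated, and as `p ⊇ I` acts faithfully on `M`, multiplication by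
generators of `p` embeds `P = ⨁ (Iⁿ N :_M p) tⁿ` into finitely many copies of it, so `P` is
Noetherian. Being the colon ideal of an element modulo the homogeneous `Iⁿ N`, `p` is homogeneous,
and a homogeneous `x` satisfies `p = (Iⁿ N :_R x)` iff `x tⁿ` lies in `P` but not in the part of
`P` killed by homogeneous elements outside `p`.

By Noetherian induction on a bihomogeneous `Q ≤ P`, the least degree of a homogeneous element of
level `n` in `P` but not in `Q` is eventually linear in `n` (or there is none): adjoin to `Q` a
bihomogeneous `z = x tᵏ ∈ P \ Q` with maximal colon ideal. In level `n`, the elements of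
`Q + A z` outside `Q` come from monomial multiples of `z`, the cheapest being `X_j^(n-k) z` for
the `X_j` of least degree with `X_j z ∉ Q`; and the minimum of two eventually linear functions is
eventually linear.
-/

open DirectSum Filter

section Projection

variable {ι G : Type*} [DecidableEq ι] [AddCommGroup G] (𝒢 : ι → AddSubgroup G)
  [Decomposition 𝒢]

noncomputable def gradedProj (i : ι) : G →+ G :=
  (𝒢 i).subtype.comp ((DFinsupp.evalAddMonoidHom i).comp (decomposeAddEquiv 𝒢).toAddMonoidHom)

lemma gradedProj_apply (i : ι) (x : G) : gradedProj 𝒢 i x = (decompose 𝒢 x i : G) := rfl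

lemma gradedProj_mem (i : ι) (x : G) : gradedProj 𝒢 i x ∈ 𝒢 i := (decompose 𝒢 x i).2

lemma gradedProj_of_mem_same {i : ι} {x : G} (hx : x ∈ 𝒢 i) : gradedProj 𝒢 i x = x :=
  decompose_of_mem_same 𝒢 hx

lemma gradedProj_of_mem_ne {i j : ι} {x : G} (hx : x ∈ 𝒢 i) (hij : i ≠ j) :
    gradedProj 𝒢 j x = 0 :=
  decompose_of_mem_ne 𝒢 hx hij

noncomputable def gradedSupport (x : G) : Finset ι := by
  classical exact (decompose 𝒢 x).support

lemma mem_gradedSupport {x : G} {i : ι} : i ∈ gradedSupport 𝒢 x ↔ gradedProj 𝒢 i x ≠ 0 := by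
  classical
  simp only [gradedSupport, DFinsupp.mem_support_iff, gradedProj_apply, ne_eq,
    ZeroMemClass.coe_eq_zero]

lemma gradedProj_eq_zero_of_notMem {x : G} {i : ι} (h : i ∉ gradedSupport 𝒢 x) :
    gradedProj 𝒢 i x = 0 :=
  not_ne_iff.1 (mt (mem_gradedSupport 𝒢).2 h)

lemma sum_gradedProj (x : G) : ∑ i ∈ gradedSupport 𝒢 x, gradedProj 𝒢 i x = x := by
  classical
  rw [gradedSupport]
  convert sum_support_decompose 𝒢 x
  rfl

lemma eq_zero_of_gradedSupport_eq_empty {x : G} (h : gradedSupport 𝒢 x = ∅) : x = 0 := by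
  rw [← sum_gradedProj 𝒢 x, h, Finset.sum_empty]

lemma gradedProj_sum_of_mem {κ : Type*} (s : Finset κ) (f : κ → G) (deg : κ → ι)
    (hf : ∀ k ∈ s, f k ∈ 𝒢 (deg k)) (i : ι) :
    gradedProj 𝒢 i (∑ k ∈ s, f k) = ∑ k ∈ s with deg k = i, f k := by
  rw [map_sum, Finset.sum_filter]
  refine Finset.sum_congr rfl fun k hk => ?_
  split_ifs with h
  · exact gradedProj_of_mem_same 𝒢 (h ▸ hf k hk)
  · exact gradedProj_of_mem_ne 𝒢 (hf k hk) h

lemma gradedSupport_sub_gradedProj (x : G) (v : ι) :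
    gradedSupport 𝒢 (x - gradedProj 𝒢 v x) = (gradedSupport 𝒢 x).erase v := by
  ext u
  rw [Finset.mem_erase, mem_gradedSupport, mem_gradedSupport, map_sub]
  rcases eq_or_ne u v with rfl | huv
  · simp [gradedProj_of_mem_same 𝒢 (gradedProj_mem 𝒢 u x)]
  · simp [gradedProj_of_mem_ne 𝒢 (gradedProj_mem 𝒢 v x) huv.symm, huv]

end Projection

section GradedModule

variable {R M : Type*} [CommRing R] [AddCommGroup M] [Module R M]
  (𝒜 : ℤ → AddSubgroup R) (ℳ : ℤ → AddSubgroup M) [Decomposition ℳ] [SetLike.GradedSMul 𝒜 ℳ]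

lemma gradedProj_smul_of_mem_left {e : ℤ} {r : R} (hr : r ∈ 𝒜 e) (x : M) (u : ℤ) :
    gradedProj ℳ (e + u) (r • x) = r • gradedProj ℳ u x := by
  classical
  conv_lhs => rw [← sum_gradedProj ℳ x, Finset.smul_sum]
  rw [gradedProj_sum_of_mem ℳ _ _ (e + ·)
    (fun u' _ => SetLike.GradedSMul.smul_mem hr (gradedProj_mem ℳ u' x))]
  simp only [add_right_inj, Finset.filter_eq']
  split_ifs with hu
  · rw [Finset.sum_singleton]
  · rw [Finset.sum_empty, gradedProj_eq_zero_of_notMem ℳ hu, smul_zero]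

lemma gradedSupport_smul_subset {e : ℤ} {r : R} (hr : r ∈ 𝒜 e) (x : M) :
    gradedSupport ℳ (r • x) ⊆ (gradedSupport ℳ x).map (addLeftEmbedding e) := by
  intro w hw
  refine Finset.mem_map.2 ⟨w - e, ?_, add_sub_cancel e w⟩
  rw [mem_gradedSupport] at hw ⊢
  rw [← add_sub_cancel e w, gradedProj_smul_of_mem_left 𝒜 ℳ hr] at hw
  exact right_ne_zero_of_smul hw

variable [GradedRing 𝒜]

lemma gradedProj_smul_of_mem_right {u : ℤ} {x : M} (hx : x ∈ ℳ u) (r : R) (e : ℤ) :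
    gradedProj ℳ (e + u) (r • x) = gradedProj 𝒜 e r • x := by
  classical
  conv_lhs => rw [← sum_gradedProj 𝒜 r, Finset.sum_smul]
  rw [gradedProj_sum_of_mem ℳ _ _ (· + u)
    (fun e' _ => SetLike.GradedSMul.smul_mem (gradedProj_mem 𝒜 e' r) hx)]
  simp only [add_left_inj, Finset.filter_eq']
  split_ifs with he
  · rw [Finset.sum_singleton]
  · rw [Finset.sum_empty, gradedProj_eq_zero_of_notMem 𝒜 he, zero_smul]

lemma gradedProj_smul (r : R) (x : M) (w : ℤ) :
    gradedProj ℳ w (r • x) =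
      ∑ u ∈ gradedSupport ℳ x, gradedProj 𝒜 (w - u) r • gradedProj ℳ u x := by
  conv_lhs => rw [← sum_gradedProj ℳ x, Finset.smul_sum, map_sum]
  refine Finset.sum_congr rfl fun u _ => ?_
  rw [← gradedProj_smul_of_mem_right 𝒜 ℳ (gradedProj_mem ℳ u x), sub_add_cancel]

lemma gradedProj_smul_of_le {r : R} {x : M} {b v : ℤ}
    (hr : ∀ e ∈ gradedSupport 𝒜 r, e ≤ b) (hx : ∀ u ∈ gradedSupport ℳ x, u ≤ v) :
    gradedProj ℳ (b + v) (r • x) = gradedProj 𝒜 b r • gradedProj ℳ v x := by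
  classical
  rw [gradedProj_smul 𝒜 ℳ, Finset.sum_eq_single v]
  · rw [add_sub_cancel_right]
  · intro u hu huv
    have hlt : b < b + v - u := by have := hx u hu; omega
    rw [gradedProj_eq_zero_of_notMem 𝒜 fun h => (hr _ h).not_gt hlt, zero_smul]
  · intro hv
    rw [gradedProj_eq_zero_of_notMem ℳ hv, smul_zero]

theorem Submodule.IsHomogeneous.smul {K : Ideal R} (hK : K.IsHomogeneous 𝒜) {P : Submodule R M}
    (hP : P.IsHomogeneous ℳ) : (K • P).IsHomogeneous ℳ := by
  intro w z hz
  change gradedProj ℳ w z ∈ K • P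
  refine Submodule.smul_induction_on hz (fun r hr x hx => ?_) fun z₁ z₂ h₁ h₂ => ?_
  · rw [gradedProj_smul 𝒜 ℳ]
    exact Submodule.sum_mem _ fun u _ => Submodule.smul_mem_smul (hK _ hr) (hP u hx)
  · rw [map_add]; exact Submodule.add_mem _ h₁ h₂

theorem Submodule.IsHomogeneous.pow_smul {I : Ideal R} (hI : I.IsHomogeneous 𝒜)
    {N : Submodule R M} (hN : N.IsHomogeneous ℳ) (n : ℕ) : (I ^ n • N).IsHomogeneous ℳ := by
  induction n with
  | zero => rwa [pow_zero, Ideal.one_eq_top, Submodule.top_smul]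
  | succ n ih => rw [pow_succ', Submodule.mul_smul]; exact Submodule.IsHomogeneous.smul 𝒜 ℳ hI ih

/-- The top component of `r • x` is `r_b • x_v`, which therefore lies in `L`; remove `x_v` and
induct on the number of components of `x`. -/
lemma pow_gradedProj_smul_mem {L : Submodule R M} (hL : L.IsHomogeneous ℳ) {r : R} {b : ℤ}
    (hb : ∀ e ∈ gradedSupport 𝒜 r, e ≤ b) {x : M} (hrx : r • x ∈ L) :
    gradedProj 𝒜 b r ^ (gradedSupport ℳ x).card • x ∈ L := by
  set rb := gradedProj 𝒜 b r
  suffices H : ∀ s : ℕ, ∀ x : M, (gradedSupport ℳ x).card ≤ s → r • x ∈ L → rb ^ s • x ∈ L from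
    H _ x le_rfl hrx
  intro s
  induction s with
  | zero =>
    intro x hx _
    rw [eq_zero_of_gradedSupport_eq_empty ℳ (Finset.card_eq_zero.1 (Nat.le_zero.1 hx)),
      smul_zero]
    exact L.zero_mem
  | succ s ih =>
    intro x hcard hrx
    rcases (gradedSupport ℳ x).eq_empty_or_nonempty with hempty | hne
    · rw [eq_zero_of_gradedSupport_eq_empty ℳ hempty, smul_zero]; exact L.zero_mem
    set v := (gradedSupport ℳ x).max' hne
    have htop : rb • gradedProj ℳ v x ∈ L := by
      rw [← gradedProj_smul_of_le 𝒜 ℳ hb fun u hu => (gradedSupport ℳ x).le_max' u hu]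
      exact hL _ hrx
    set x' := x - gradedProj ℳ v x
    have hx'card : (gradedSupport ℳ (rb • x')).card ≤ s := by
      calc (gradedSupport ℳ (rb • x')).card
          ≤ (gradedSupport ℳ x').card :=
            (Finset.card_le_card (gradedSupport_smul_subset 𝒜 ℳ (gradedProj_mem 𝒜 b r) x')).trans
              (Finset.card_map _).le
        _ = (gradedSupport ℳ x).card - 1 := by
            rw [gradedSupport_sub_gradedProj, Finset.card_erase_of_mem (Finset.max'_mem _ _)]
        _ ≤ s := by omega
    have hrx' : r • rb • x' ∈ L := by
      rw [smul_comm r rb, smul_sub, smul_sub, smul_comm rb r (gradedProj ℳ v x)]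
      exact L.sub_mem (L.smul_mem _ hrx) (L.smul_mem _ htop)
    have hsplit : rb ^ (s + 1) • x = rb ^ s • rb • x' + rb ^ s • rb • gradedProj ℳ v x := by
      rw [← smul_add, ← smul_add, sub_add_cancel, pow_succ, mul_smul]
    rw [hsplit]
    exact L.add_mem (ih _ hx'card hrx') (L.smul_mem _ htop)

theorem Ideal.IsHomogeneous.of_isPrime_of_forall_mem_iff {L : Submodule R M}
    (hL : L.IsHomogeneous ℳ) {p : Ideal R} (hp : p.IsPrime) {x : M}
    (hx : ∀ r : R, r ∈ p ↔ r • x ∈ L) : p.IsHomogeneous 𝒜 := by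
  suffices H : ∀ k : ℕ, ∀ r ∈ p, (gradedSupport 𝒜 r).card ≤ k → ∀ e, gradedProj 𝒜 e r ∈ p from
    fun e r hr => H _ r hr le_rfl e
  intro k
  induction k with
  | zero =>
    intro r _ hr e
    rw [eq_zero_of_gradedSupport_eq_empty 𝒜 (Finset.card_eq_zero.1 (Nat.le_zero.1 hr)),
      map_zero]
    exact p.zero_mem
  | succ k ih =>
    intro r hr hcard e
    rcases (gradedSupport 𝒜 r).eq_empty_or_nonempty with hempty | hne
    · rw [eq_zero_of_gradedSupport_eq_empty 𝒜 hempty, map_zero]; exact p.zero_mem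
    set b := (gradedSupport 𝒜 r).max' hne
    have htop : gradedProj 𝒜 b r ∈ p :=
      hp.mem_of_pow_mem _ <| (hx _).2 <| pow_gradedProj_smul_mem 𝒜 ℳ hL
        (fun e he => (gradedSupport 𝒜 r).le_max' e he) ((hx r).1 hr)
    have hrest := ih (r - gradedProj 𝒜 b r) (p.sub_mem hr htop) (by
      rw [gradedSupport_sub_gradedProj, Finset.card_erase_of_mem (Finset.max'_mem _ _)]
      omega) e
    rcases eq_or_ne e b with rfl | heb
    · exact htop
    · rwa [map_sub, gradedProj_of_mem_ne 𝒜 (gradedProj_mem 𝒜 _ r) heb.symm, sub_zero] at hrest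

end GradedModule

section Rees

variable {σ R M : Type*} [CommRing R] [AddCommGroup M] [Module R M]

lemma pow_smul_le_of_smul_le_succ {J : Ideal R} {C : ℕ → Submodule R M}
    (hC : ∀ n, J • C n ≤ C (n + 1)) (k n : ℕ) : J ^ k • C n ≤ C (n + k) := by
  induction k generalizing n with
  | zero => rw [pow_zero, Ideal.one_eq_top, Submodule.top_smul, add_zero]
  | succ k ih =>
    rw [pow_succ, Submodule.mul_smul, ← add_assoc, add_right_comm]
    exact (Submodule.smul_mono le_rfl (hC n)).trans (ih (n + 1))

noncomputable def reesHom (y : σ → R) : MvPolynomial σ R →ₐ[R] Polynomial R :=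
  MvPolynomial.aeval fun j => Polynomial.C (y j) * Polynomial.X

/-- `M[t]` as a module over `R[X_j]` through `X_j ↦ y_j t`; the Rees module `⨁ Lₙ tⁿ` of a family
with `(y) Lₙ ⊆ Lₙ₊₁` is `familySubmodule`. -/
def ReesAmbient (R M : Type*) [CommRing R] [AddCommGroup M] [Module R M] (_y : σ → R) :
    Type _ :=
  PolynomialModule R M

namespace ReesAmbient

variable (y : σ → R)

noncomputable instance : AddCommGroup (ReesAmbient R M y) :=
  inferInstanceAs (AddCommGroup (PolynomialModule R M))

noncomputable instance : Module (MvPolynomial σ R) (ReesAmbient R M y) :=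
  Module.compHom (PolynomialModule R M) (reesHom y).toRingHom

instance : FunLike (ReesAmbient R M y) ℕ M where
  coe f := (show PolynomialModule R M from f).coeff
  coe_injective _ _ h := PolynomialModule.coeff_injective (DFunLike.coe_injective h)

variable {y}

@[ext]
lemma ext {f g : ReesAmbient R M y} (h : ∀ n, f n = g n) : f = g := DFunLike.ext _ _ h

@[simp]
lemma add_apply (f g : ReesAmbient R M y) (n : ℕ) : (f + g) n = f n + g n := rfl

@[simp]
lemma zero_apply (n : ℕ) : (0 : ReesAmbient R M y) n = 0 := rfl

lemma smul_apply (a : MvPolynomial σ R) (f : ReesAmbient R M y) (n : ℕ) :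
    (a • f) n = ∑ q ∈ Finset.HasAntidiagonal.antidiagonal n, (reesHom y a).coeff q.1 • f q.2 :=
  PolynomialModule.smul_apply _ _ _

lemma C_smul_apply (r : R) (f : ReesAmbient R M y) (n : ℕ) :
    ((MvPolynomial.C r : MvPolynomial σ R) • f) n = r • f n := by
  rw [smul_apply, Finset.sum_eq_single (0, n)]
  · simp [reesHom]
  · rintro ⟨i, k⟩ hik hne
    have hi : i ≠ 0 := by
      rintro rfl
      rw [Finset.HasAntidiagonal.mem_antidiagonal, zero_add] at hik
      exact hne (by rw [← hik])
    simp [reesHom, Polynomial.coeff_C, hi]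
  · simp

variable (y)

noncomputable def single (n : ℕ) : M →+ ReesAmbient R M y :=
  (PolynomialModule.lsingle R n).toAddMonoidHom

variable {y}

lemma single_apply (n : ℕ) (x : M) (k : ℕ) : single y n x k = if n = k then x else 0 :=
  Finsupp.single_apply

lemma single_apply_self (n : ℕ) (x : M) : single y n x n = x := by
  rw [single_apply, if_pos rfl]

lemma sum_single (f : ReesAmbient R M y) :
    ∑ n ∈ (show PolynomialModule R M from f).coeff.support, single y n (f n) = f := by
  change ∑ n ∈ _, PolynomialModule.single R n _ = (f : PolynomialModule R M)
  apply PolynomialModule.coeff_injective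
  rw [PolynomialModule.coeff_sum]
  exact Finsupp.sum_single _

lemma mem_of_forall_single_apply_mem {S : Submodule (MvPolynomial σ R) (ReesAmbient R M y)}
    {f : ReesAmbient R M y} (h : ∀ n, single y n (f n) ∈ S) : f ∈ S := by
  rw [← sum_single f]
  exact S.sum_mem fun n _ => h n

lemma reesHom_monomial (m : σ →₀ ℕ) (r : R) :
    reesHom y (MvPolynomial.monomial m r) =
      Polynomial.monomial m.degree (r * m.prod fun j e => y j ^ e) := by
  rw [reesHom, MvPolynomial.aeval_monomial, Finsupp.prod]
  simp_rw [mul_pow, ← Polynomial.C_pow]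
  rw [Finset.prod_mul_distrib, ← map_prod, Finset.prod_pow_eq_pow_sum, Polynomial.algebraMap_eq,
    ← mul_assoc, ← Polynomial.C_mul, Polynomial.C_mul_X_pow_eq_monomial, Finsupp.degree_apply,
    Finsupp.prod]

lemma monomial_smul_single (m : σ →₀ ℕ) (r : R) (n : ℕ) (x : M) :
    MvPolynomial.monomial m r • single y n x =
      single y (m.degree + n) ((r * m.prod fun j e => y j ^ e) • x) := by
  change reesHom y (MvPolynomial.monomial m r) • PolynomialModule.single R n x = _
  rw [reesHom_monomial, PolynomialModule.monomial_smul_single]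
  rfl

lemma C_smul_single (r : R) (n : ℕ) (x : M) :
    (MvPolynomial.C r : MvPolynomial σ R) • single y n x = single y n (r • x) := by
  simpa using monomial_smul_single (y := y) 0 r n x

lemma X_smul_single (j : σ) (n : ℕ) (x : M) :
    (MvPolynomial.X j : MvPolynomial σ R) • single y n x = single y (n + 1) (y j • x) := by
  rw [MvPolynomial.X]
  simpa [add_comm] using monomial_smul_single (y := y) (Finsupp.single j 1) 1 n x

lemma coeff_reesHom_mem (a : MvPolynomial σ R) (k : ℕ) :
    (reesHom y a).coeff k ∈ Ideal.span (Set.range y) ^ k := by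
  induction a using MvPolynomial.induction_on generalizing k with
  | C r =>
    cases k with
    | zero => simp
    | succ k => simp [reesHom]
  | add a b ha hb => rw [map_add, Polynomial.coeff_add]; exact Ideal.add_mem _ (ha k) (hb k)
  | mul_X a j ha =>
    cases k with
    | zero => simp [reesHom]
    | succ k =>
      rw [map_mul, reesHom, MvPolynomial.aeval_X, ← mul_assoc, Polynomial.coeff_mul_X,
        Polynomial.coeff_mul_C, pow_succ]
      exact Ideal.mul_mem_mul (ha k) (Ideal.subset_span ⟨j, rfl⟩)

variable (y)

def slice (S : Submodule (MvPolynomial σ R) (ReesAmbient R M y)) (n : ℕ) : Submodule R M where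
  carrier := {x | single y n x ∈ S}
  add_mem' hx hx' := by simp only [Set.mem_ofPred_eq, map_add]; exact S.add_mem hx hx'
  zero_mem' := by simp only [Set.mem_ofPred_eq, map_zero]; exact S.zero_mem
  smul_mem' r x hx := by
    simp only [Set.mem_ofPred_eq, ← C_smul_single]; exact S.smul_mem _ hx

variable {y}

lemma mem_slice {S : Submodule (MvPolynomial σ R) (ReesAmbient R M y)} {n : ℕ} {x : M} :
    x ∈ slice y S n ↔ single y n x ∈ S := Iff.rfl

lemma span_range_smul_slice_le (S : Submodule (MvPolynomial σ R) (ReesAmbient R M y)) (n : ℕ) :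
    Ideal.span (Set.range y) • slice y S n ≤ slice y S (n + 1) := by
  refine Submodule.smul_le.2 fun r hr x hx => ?_
  induction hr using Submodule.span_induction with
  | mem _ h =>
    obtain ⟨j, rfl⟩ := h
    rw [mem_slice, ← X_smul_single]
    exact S.smul_mem _ hx
  | zero => rw [zero_smul]; exact Submodule.zero_mem _
  | add _ _ _ _ h h' => rw [add_smul]; exact Submodule.add_mem _ h h'
  | smul a _ _ h => rw [smul_eq_mul, mul_smul]; exact Submodule.smul_mem _ a h

variable (y)

noncomputable def familySubmodule (C : ℕ → Submodule R M)
    (hC : ∀ n, Ideal.span (Set.range y) • C n ≤ C (n + 1)) :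
    Submodule (MvPolynomial σ R) (ReesAmbient R M y) where
  carrier := {f | ∀ n, f n ∈ C n}
  add_mem' hf hg n := (C n).add_mem (hf n) (hg n)
  zero_mem' n := (C n).zero_mem
  smul_mem' a f hf n := by
    rw [smul_apply]
    refine Submodule.sum_mem _ fun q hq => ?_
    rw [Finset.HasAntidiagonal.mem_antidiagonal] at hq
    have := pow_smul_le_of_smul_le_succ hC q.1 q.2
      (Submodule.smul_mem_smul (coeff_reesHom_mem a q.1) (hf q.2))
    rwa [add_comm, hq] at this

variable {y}

lemma mem_familySubmodule {C : ℕ → Submodule R M} {hC} {f : ReesAmbient R M y} :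
    f ∈ familySubmodule y C hC ↔ ∀ n, f n ∈ C n := Iff.rfl

@[simp]
lemma slice_familySubmodule (C : ℕ → Submodule R M) (hC) (n : ℕ) :
    slice y (familySubmodule y C hC) n = C n := by
  ext x
  rw [mem_slice, mem_familySubmodule]
  refine ⟨fun h => by simpa only [single_apply_self] using h n, fun hx k => ?_⟩
  rw [single_apply]
  split_ifs with h
  · exact h ▸ hx
  · exact (C k).zero_mem

lemma familySubmodule_le_iff {C : ℕ → Submodule R M} {hC}
    {S : Submodule (MvPolynomial σ R) (ReesAmbient R M y)} :
    familySubmodule y C hC ≤ S ↔ ∀ n, C n ≤ slice y S n := by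
  refine ⟨fun h n => ?_, fun h f hf => mem_of_forall_single_apply_mem fun n => h n (hf n)⟩
  rw [← slice_familySubmodule C hC n]
  exact fun x hx => h hx

lemma fg_familySubmodule [IsNoetherian R M] {C : ℕ → Submodule R M} (hC) (m₀ : ℕ)
    (hstable : ∀ n ≥ m₀, C (n + 1) ≤ Ideal.span (Set.range y) • C n) :
    (familySubmodule y C hC).FG := by
  choose S hS using fun n => IsNoetherian.noetherian (C n)
  let G : Set (ReesAmbient R M y) := ⋃ n ∈ Finset.range (m₀ + 1), single y n '' (S n : Set M)
  have hG : G.Finite := Set.Finite.biUnion (Finset.finite_toSet _) fun n _ =>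
    (S n).finite_toSet.image _
  refine Submodule.fg_def.2 ⟨G, hG, le_antisymm ?_ ?_⟩
  · refine Submodule.span_le.2 fun f hf => ?_
    simp only [G, Set.mem_iUnion, Set.mem_image] at hf
    obtain ⟨n, -, x, hx, rfl⟩ := hf
    rw [SetLike.mem_coe, ← mem_slice, slice_familySubmodule, ← hS]
    exact Submodule.subset_span hx
  · refine familySubmodule_le_iff.2 fun n => ?_
    induction n using Nat.strong_induction_on with
    | _ n ih =>
      rcases le_or_gt n m₀ with hn | hn
      · rw [← hS, Submodule.span_le]
        exact fun x hx => Submodule.subset_span <| Set.mem_biUnion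
          (Finset.mem_coe.2 (Finset.mem_range_succ_iff.2 hn)) (Set.mem_image_of_mem _ hx)
      · obtain ⟨k, rfl⟩ : ∃ k, n = k + 1 := ⟨n - 1, by omega⟩
        exact (hstable k (by omega)).trans <| (Submodule.smul_mono le_rfl (ih k (by omega))).trans
          (span_range_smul_slice_le _ k)

lemma isNoetherian_familySubmodule [IsNoetherianRing R] [Finite σ]
    {C L : ℕ → Submodule R M} (hC) (hL) (hLfg : (familySubmodule y L hL).FG) {p : Ideal R}
    (hCL : ∀ n, p • C n ≤ L n) (hp : ∀ x : M, (∀ r ∈ p, r • x = 0) → x = 0) :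
    IsNoetherian (MvPolynomial σ R) (familySubmodule y C hC) := by
  obtain ⟨S, hS⟩ := (IsNoetherian.noetherian p : p.FG)
  have := isNoetherian_of_fg_of_noetherian _ hLfg
  let Φ : familySubmodule y C hC →ₗ[MvPolynomial σ R] (S → familySubmodule y L hL) :=
    LinearMap.pi fun r => (LinearMap.lsmul _ _ (MvPolynomial.C r.1)).restrict fun f hf n => by
      rw [LinearMap.lsmul_apply, C_smul_apply]
      exact hCL n (Submodule.smul_mem_smul (hS ▸ Submodule.subset_span r.2) (hf n))
  refine isNoetherian_of_injective Φ ((injective_iff_map_eq_zero Φ).2 fun f hf => ?_)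
  ext n
  refine hp _ fun r hr => ?_
  rw [← Submodule.mem_annihilator_span_singleton]
  refine (Ideal.span_le.2 fun s hs => ?_) (hS ▸ hr)
  rw [SetLike.mem_coe, Submodule.mem_annihilator_span_singleton, ← C_smul_apply]
  have hs0 : (MvPolynomial.C s : MvPolynomial σ R) • (f : ReesAmbient R M y) = 0 :=
    congr_arg Subtype.val (congr_fun hf ⟨s, hs⟩)
  rw [hs0, zero_apply]

lemma X_pow_smul_single (j : σ) (i k : ℕ) (x : M) :
    (MvPolynomial.X j : MvPolynomial σ R) ^ i • single y k x = single y (k + i) (y j ^ i • x) := by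
  induction i with
  | zero => rw [pow_zero, pow_zero, one_smul, one_smul, add_zero]
  | succ i ih => rw [pow_succ', mul_smul, ih, X_smul_single, pow_succ', mul_smul, add_assoc]

lemma monomial_smul_mem_of_mem_support {Q : Submodule (MvPolynomial σ R) (ReesAmbient R M y)}
    {z : ReesAmbient R M y} {m : σ →₀ ℕ} {j : σ} (hj : j ∈ m.support)
    (hQ : (MvPolynomial.X j : MvPolynomial σ R) • z ∈ Q) (r : R) :
    MvPolynomial.monomial m r • z ∈ Q := by
  have : MvPolynomial.monomial m r = MvPolynomial.monomial (m - Finsupp.single j 1) r *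
      MvPolynomial.X j := by
    rw [MvPolynomial.X, MvPolynomial.monomial_mul, mul_one, tsub_add_cancel_of_le]
    exact Finsupp.single_le_iff.2 (Nat.one_le_iff_ne_zero.2 (Finsupp.mem_support_iff.1 hj))
  rw [this, mul_smul]
  exact Q.smul_mem _ hQ

end ReesAmbient

end Rees

open ReesAmbient

section EventuallyLinearLeast

variable {ι : Type*} (d : ι → ℤ)

def EventuallyLinearLeast (S : ℕ → Set ℤ) : Prop :=
  (∀ᶠ n in atTop, S n = ∅) ∨ ∃ j b, ∀ᶠ n in atTop, IsLeast (S n) (d j * n + b)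

lemma exists_eventually_min_eq (j j' : ι) (b b' : ℤ) :
    ∃ j'' b'', ∀ᶠ n : ℕ in atTop, min (d j * n + b) (d j' * n + b') = d j'' * n + b'' := by
  have key : ∀ j j' b b', d j < d j' →
      ∀ᶠ n : ℕ in atTop, min (d j * n + b) (d j' * n + b') = d j * n + b := fun j j' b b' h =>
    (eventually_ge_atTop (b - b').toNat).mono fun n hn => min_eq_left <| by
      have : b - b' ≤ n := (Int.self_le_toNat _).trans (by exact_mod_cast hn)
      nlinarith
  rcases lt_trichotomy (d j) (d j') with h | h | h
  · exact ⟨j, b, key j j' b b' h⟩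
  · exact ⟨j, min b b', .of_forall fun n => by rw [h, min_add_add_left]⟩
  · exact ⟨j', b', (key j' j b' b h).mono fun n hn => by rw [min_comm, hn]⟩

variable {d}

lemma EventuallyLinearLeast.union {S T : ℕ → Set ℤ} (hS : EventuallyLinearLeast d S)
    (hT : EventuallyLinearLeast d T) : EventuallyLinearLeast d fun n => S n ∪ T n := by
  rcases hS with hS | ⟨j, b, hS⟩ <;> rcases hT with hT | ⟨j', b', hT⟩
  · exact .inl (hS.and hT |>.mono fun n h => by simp only [h.1, h.2, Set.empty_union])
  · exact .inr ⟨j', b', hS.and hT |>.mono fun n h => by simpa only [h.1, Set.empty_union] using h.2⟩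
  · exact .inr ⟨j, b, hS.and hT |>.mono fun n h => by simpa only [h.2, Set.union_empty] using h.1⟩
  · obtain ⟨j'', b'', hmin⟩ := exists_eventually_min_eq d j j' b b'
    exact .inr ⟨j'', b'', (hS.and (hT.and hmin)).mono fun n h => h.2.2 ▸ h.1.union h.2.1⟩

end EventuallyLinearLeast

lemma Finsupp.degree_mul_le_weight {σ : Type*} {d : σ → ℤ} {c : ℤ} (m : σ →₀ ℕ)
    (h : ∀ j ∈ m.support, c ≤ d j) : (m.degree : ℤ) * c ≤ Finsupp.weight d m := by
  rw [Finsupp.degree_apply, Finsupp.weight_apply, Finsupp.sum, Nat.cast_sum, Finset.sum_mul]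
  exact Finset.sum_le_sum fun j hj => by
    rw [nsmul_eq_mul]; exact mul_le_mul_of_nonneg_left (h j hj) (Int.natCast_nonneg _)

section Bigraded

variable {σ R M : Type*} [CommRing R] [AddCommGroup M] [Module R M]
  (ℳ : ℤ → AddSubgroup M) {y : σ → R}

def degreesBetween (P Q : Submodule (MvPolynomial σ R) (ReesAmbient R M y)) (n : ℕ) :
    Set ℤ :=
  {u | ∃ x ∈ ℳ u, x ∈ slice y P n ∧ x ∉ slice y Q n}

variable {ℳ} in
lemma degreesBetween_eq_union {P Q Q' : Submodule (MvPolynomial σ R) (ReesAmbient R M y)}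
    (hQQ' : Q ≤ Q') (hQ'P : Q' ≤ P) (n : ℕ) :
    degreesBetween ℳ P Q n = degreesBetween ℳ P Q' n ∪ degreesBetween ℳ Q' Q n := by
  ext u
  constructor
  · rintro ⟨x, hx, hP, hQ⟩
    by_cases hQ' : x ∈ slice y Q' n
    exacts [.inr ⟨x, hx, hQ', hQ⟩, .inl ⟨x, hx, hP, hQ'⟩]
  · rintro (⟨x, hx, hP, hQ'⟩ | ⟨x, hx, hQ', hQ⟩)
    exacts [⟨x, hx, hP, fun h => hQ' (hQQ' h)⟩, ⟨x, hx, hQ'P hQ', hQ⟩]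

variable [Decomposition ℳ]

def IsBihomogeneous (Q : Submodule (MvPolynomial σ R) (ReesAmbient R M y)) : Prop :=
  ∀ f ∈ Q, ∀ n u, gradedProj ℳ u (f n) ∈ slice y Q n

variable {ℳ}

lemma isBihomogeneous_familySubmodule {C : ℕ → Submodule R M}
    {hC : ∀ n, Ideal.span (Set.range y) • C n ≤ C (n + 1)} (h : ∀ n, (C n).IsHomogeneous ℳ) :
    IsBihomogeneous ℳ (familySubmodule y C hC) := fun f hf n u => by
  rw [slice_familySubmodule]; exact h n u (hf n)

lemma IsBihomogeneous.inf {Q Q' : Submodule (MvPolynomial σ R) (ReesAmbient R M y)}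
    (hQ : IsBihomogeneous ℳ Q) (hQ' : IsBihomogeneous ℳ Q') : IsBihomogeneous ℳ (Q ⊓ Q') :=
  fun f hf n u => ⟨hQ f hf.1 n u, hQ' f hf.2 n u⟩

lemma mem_of_forall_gradedProj_mem {Q : Submodule (MvPolynomial σ R) (ReesAmbient R M y)}
    {f : ReesAmbient R M y} (h : ∀ n u, gradedProj ℳ u (f n) ∈ slice y Q n) : f ∈ Q :=
  mem_of_forall_single_apply_mem fun n => by
    rw [← mem_slice, ← sum_gradedProj ℳ (f n)]
    exact Submodule.sum_mem _ fun u _ => h n u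

lemma exists_mem_degreesBetween {P Q : Submodule (MvPolynomial σ R) (ReesAmbient R M y)}
    (hP : IsBihomogeneous ℳ P) (hPQ : ¬ P ≤ Q) : ∃ n, (degreesBetween ℳ P Q n).Nonempty := by
  contrapose! hPQ
  refine fun f hf => mem_of_forall_gradedProj_mem (ℳ := ℳ) fun n u => ?_
  by_contra hQ
  exact (Set.eq_empty_iff_forall_notMem.1 (hPQ n)) u ⟨_, gradedProj_mem ℳ u (f n), hP f hf n u, hQ⟩

variable {𝒜 : ℤ → AddSubgroup R} [GradedRing 𝒜] [SetLike.GradedSMul 𝒜 ℳ] {d : σ → ℤ}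

lemma prod_pow_mem_weight (hy : ∀ j, y j ∈ 𝒜 (d j)) (m : σ →₀ ℕ) :
    (m.prod fun j e => y j ^ e) ∈ 𝒜 (Finsupp.weight d m) :=
  SetLike.prod_pow_mem_graded 𝒜 d y m fun j _ => hy j

lemma single_gradedProj_smul_single_mem_closure (hy : ∀ j, y j ∈ 𝒜 (d j)) {k : ℕ} {v : ℤ}
    {x : M} (hx : x ∈ ℳ v) (a : MvPolynomial σ R) (n : ℕ) (u : ℤ) :
    single y n (gradedProj ℳ u ((a • single y k x) n)) ∈ AddSubmonoid.closure
      {g | ∃ m r, m.degree + k = n ∧ r ∈ 𝒜 (u - v - Finsupp.weight d m) ∧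
        g = MvPolynomial.monomial m r • single y k x} := by
  induction a using MvPolynomial.induction_on' with
  | monomial m r =>
    rw [monomial_smul_single, single_apply]
    split_ifs with h
    · refine AddSubmonoid.subset_closure ⟨m, gradedProj 𝒜 (u - v - Finsupp.weight d m) r, h,
        gradedProj_mem 𝒜 _ r, ?_⟩
      have hmx : (m.prod fun j e => y j ^ e) • x ∈ ℳ (Finsupp.weight d m + v) :=
        SetLike.GradedSMul.smul_mem (prod_pow_mem_weight hy m) hx
      rw [monomial_smul_single, h, mul_smul, mul_smul, ← gradedProj_smul_of_mem_right 𝒜 ℳ hmx,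
        sub_sub, add_comm v, sub_add_cancel]
    · rw [map_zero, map_zero]
      exact AddSubmonoid.zero_mem _
  | add a b ha hb =>
    rw [add_smul, ReesAmbient.add_apply, map_add, map_add]
    exact AddSubmonoid.add_mem _ ha hb

lemma IsBihomogeneous.sup_span_singleton (hy : ∀ j, y j ∈ 𝒜 (d j))
    {Q : Submodule (MvPolynomial σ R) (ReesAmbient R M y)} (hQ : IsBihomogeneous ℳ Q)
    {k : ℕ} {v : ℤ} {x : M} (hx : x ∈ ℳ v) :
    IsBihomogeneous ℳ (Q ⊔ Submodule.span (MvPolynomial σ R) {single y k x}) := by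
  intro f hf n u
  obtain ⟨q, hq, _, hw, rfl⟩ := Submodule.mem_sup.1 hf
  obtain ⟨a, rfl⟩ := Submodule.mem_span_singleton.1 hw
  rw [ReesAmbient.add_apply, map_add]
  refine Submodule.add_mem _ (Submodule.mem_sup_left (hQ q hq n u)) (mem_slice.2 ?_)
  refine AddSubmonoid.closure_le.2 ?_
    (single_gradedProj_smul_single_mem_closure (k := k) hy hx a n u)
  rintro _ ⟨m, r, -, -, rfl⟩
  exact Submodule.mem_sup_right (Submodule.smul_mem _ _ (Submodule.mem_span_singleton_self _))

lemma exists_monomial_smul_single_notMem (hy : ∀ j, y j ∈ 𝒜 (d j))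
    {Q : Submodule (MvPolynomial σ R) (ReesAmbient R M y)} (hQ : IsBihomogeneous ℳ Q)
    {k : ℕ} {v : ℤ} {x : M} (hx : x ∈ ℳ v) {n : ℕ} {u : ℤ}
    (hu : u ∈ degreesBetween ℳ (Q ⊔ Submodule.span (MvPolynomial σ R) {single y k x}) Q n) :
    ∃ m r, m.degree + k = n ∧ r ∈ 𝒜 (u - v - Finsupp.weight d m) ∧
      MvPolynomial.monomial m r • single y k x ∉ Q := by
  obtain ⟨x', hx', hmem, hnot⟩ := hu
  obtain ⟨q, hq, _, hw, hqw⟩ := Submodule.mem_sup.1 (mem_slice.1 hmem)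
  obtain ⟨a, rfl⟩ := Submodule.mem_span_singleton.1 hw
  by_contra! hall
  refine hnot (mem_slice.2 ?_)
  have hclosure := single_gradedProj_smul_single_mem_closure (k := k) hy hx a n u
  rw [← gradedProj_of_mem_same ℳ hx', ← single_apply_self (y := y) n x', ← hqw,
    ReesAmbient.add_apply, map_add, map_add]
  refine Q.add_mem (hQ q hq n u) (AddSubmonoid.closure_le.2 ?_ hclosure)
  rintro _ ⟨m, r, hm, hr, rfl⟩
  exact hall m r hm hr

end Bigraded

section AdjoinElement

variable {σ R M : Type*} [CommRing R] [AddCommGroup M] [Module R M]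
  {ℳ : ℤ → AddSubgroup M} {y : σ → R}
  {𝒜 : ℤ → AddSubgroup R} [GradedRing 𝒜] [SetLike.GradedSMul 𝒜 ℳ] {d : σ → ℤ}
  {Q : Submodule (MvPolynomial σ R) (ReesAmbient R M y)} {k : ℕ} {v : ℤ} {x : M}

variable (ℳ Q k x) in
/-- As `Q.colon {z} ≤ Q.colon {a • z}` always, this says that the colon ideal of `z = x tᵏ` is
maximal among those of its bihomogeneous multiples outside `Q`. -/
def IsMaximalColon : Prop :=
  ∀ (a : MvPolynomial σ R) (n : ℕ) (u : ℤ) (x' : M), x' ∈ ℳ u → a • single y k x = single y n x' →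
    a • single y k x ∉ Q → Q.colon {a • single y k x} ≤ Q.colon {single y k x}

lemma X_pow_smul_notMem (hy : ∀ j, y j ∈ 𝒜 (d j)) (hx : x ∈ ℳ v)
    (hxQ : single y k x ∉ Q) (hmax : IsMaximalColon ℳ Q k x) {j : σ}
    (hj : (MvPolynomial.X j : MvPolynomial σ R) • single y k x ∉ Q) (i : ℕ) :
    (MvPolynomial.X j : MvPolynomial σ R) ^ i • single y k x ∉ Q := by
  induction i with
  | zero => rwa [pow_zero, one_smul]
  | succ i ih =>
    intro h
    have hXj : (MvPolynomial.X j : MvPolynomial σ R) ∈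
        Q.colon {(MvPolynomial.X j : MvPolynomial σ R) ^ i • single y k x} := by
      rwa [Submodule.mem_colon_singleton, smul_smul, ← pow_succ']
    have hdeg : y j ^ i • x ∈ ℳ (i • d j + v) :=
      SetLike.GradedSMul.smul_mem (SetLike.pow_mem_graded i (hy j)) hx
    exact hj (Submodule.mem_colon_singleton.1
      (hmax _ _ _ _ hdeg (X_pow_smul_single j i k x) ih hXj))

variable [Decomposition ℳ]

lemma degreesBetween_sup_span_singleton_eq_empty (hy : ∀ j, y j ∈ 𝒜 (d j))
    (hQ : IsBihomogeneous ℳ Q) (hx : x ∈ ℳ v)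
    (hX : ∀ j, (MvPolynomial.X j : MvPolynomial σ R) • single y k x ∈ Q) {n : ℕ} (hn : k < n) :
    degreesBetween ℳ (Q ⊔ Submodule.span (MvPolynomial σ R) {single y k x}) Q n = ∅ := by
  refine Set.eq_empty_iff_forall_notMem.2 fun u hu => ?_
  obtain ⟨m, r, hm, -, hnot⟩ := exists_monomial_smul_single_notMem (d := d) hy hQ hx hu
  obtain ⟨j, hj⟩ : m.support.Nonempty := by
    rw [Finsupp.support_nonempty_iff]
    rintro rfl
    simp only [map_zero, zero_add] at hm
    omega
  exact hnot (monomial_smul_mem_of_mem_support hj (hX j) r)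

/-- A monomial `X^m` with `X^m • x tᵏ ∉ Q` only involves `X_j` with `X_j • x tᵏ ∉ Q`, so its weight
is at least `|m| d_{j₀}`. -/
lemma isLeast_degreesBetween_sup_span_singleton (hA : ∀ i < 0, 𝒜 i = ⊥)
    (hy : ∀ j, y j ∈ 𝒜 (d j)) (hQ : IsBihomogeneous ℳ Q) (hx : x ∈ ℳ v)
    (hxQ : single y k x ∉ Q) (hmax : IsMaximalColon ℳ Q k x) {j₀ : σ}
    (hj₀ : (MvPolynomial.X j₀ : MvPolynomial σ R) • single y k x ∉ Q)
    (hmin : ∀ j, (MvPolynomial.X j : MvPolynomial σ R) • single y k x ∉ Q → d j₀ ≤ d j)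
    {n : ℕ} (hn : k ≤ n) :
    IsLeast (degreesBetween ℳ (Q ⊔ Submodule.span (MvPolynomial σ R) {single y k x}) Q n)
      (d j₀ * n + (v - k * d j₀)) := by
  constructor
  · have hpow := X_pow_smul_single (R := R) (y := y) j₀ (n - k) k x
    rw [Nat.add_sub_cancel' hn] at hpow
    refine ⟨y j₀ ^ (n - k) • x, ?_, ?_, ?_⟩
    · convert SetLike.GradedSMul.smul_mem (SetLike.pow_mem_graded (n - k) (hy j₀)) hx using 2
      rw [vadd_eq_add, nsmul_eq_mul, Nat.cast_sub hn]
      ring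
    · rw [mem_slice, ← hpow]
      exact Submodule.mem_sup_right (Submodule.smul_mem _ _ (Submodule.mem_span_singleton_self _))
    · rw [mem_slice, ← hpow]
      exact X_pow_smul_notMem hy hx hxQ hmax hj₀ (n - k)
  · intro u hu
    obtain ⟨m, r, hm, hr, hnot⟩ := exists_monomial_smul_single_notMem (d := d) hy hQ hx hu
    have hr0 : r ≠ 0 := by
      rintro rfl
      simp [MvPolynomial.monomial_zero] at hnot
    have hdeg : 0 ≤ u - v - Finsupp.weight d m := by
      by_contra! hlt
      exact hr0 (by simpa [hA _ hlt] using hr)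
    have hweight := Finsupp.degree_mul_le_weight (d := d) m fun j hj =>
      hmin j fun hXj => hnot (monomial_smul_mem_of_mem_support hj hXj r)
    have hmn : (m.degree : ℤ) = n - k := by omega
    rw [hmn] at hweight
    linarith

lemma eventuallyLinearLeast_sup_span_singleton [Finite σ] (hA : ∀ i < 0, 𝒜 i = ⊥)
    (hy : ∀ j, y j ∈ 𝒜 (d j)) (hQ : IsBihomogeneous ℳ Q) (hx : x ∈ ℳ v)
    (hxQ : single y k x ∉ Q) (hmax : IsMaximalColon ℳ Q k x) :
    EventuallyLinearLeast d
      (degreesBetween ℳ (Q ⊔ Submodule.span (MvPolynomial σ R) {single y k x}) Q) := by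
  by_cases hX : ∀ j, (MvPolynomial.X j : MvPolynomial σ R) • single y k x ∈ Q
  · exact .inl <| (eventually_gt_atTop k).mono fun n hn =>
      degreesBetween_sup_span_singleton_eq_empty hy hQ hx hX hn
  push Not at hX
  obtain ⟨j₀, hj₀, hmin⟩ := Set.exists_min_image _ d (Set.toFinite _) hX
  exact .inr ⟨j₀, v - k * d j₀, (eventually_ge_atTop k).mono fun n hn =>
    isLeast_degreesBetween_sup_span_singleton hA hy hQ hx hxQ hmax hj₀ hmin hn⟩

end AdjoinElement

section NoetherianInduction

variable {σ R M : Type*} [CommRing R] [AddCommGroup M] [Module R M]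
  {ℳ : ℤ → AddSubgroup M} [Decomposition ℳ] {y : σ → R}
  {𝒜 : ℤ → AddSubgroup R} [GradedRing 𝒜] [SetLike.GradedSMul 𝒜 ℳ] {d : σ → ℤ}

lemma exists_isMaximalColon [IsNoetherianRing (MvPolynomial σ R)]
    {P Q : Submodule (MvPolynomial σ R) (ReesAmbient R M y)} (hP : IsBihomogeneous ℳ P)
    (hPQ : ¬ P ≤ Q) :
    ∃ k v x, x ∈ ℳ v ∧ x ∈ slice y P k ∧ x ∉ slice y Q k ∧ IsMaximalColon ℳ Q k x := by
  obtain ⟨n, u, x, hx, hxP, hxQ⟩ := exists_mem_degreesBetween hP hPQ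
  obtain ⟨_, ⟨k, v, x, hx, hxP, hxQ, rfl⟩, hmax⟩ := set_has_maximal_iff_noetherian.2
    inferInstance {K | ∃ k v x, x ∈ ℳ v ∧ x ∈ slice y P k ∧ x ∉ slice y Q k ∧
      K = Q.colon {single y k x}} ⟨_, n, u, x, hx, hxP, hxQ, rfl⟩
  refine ⟨k, v, x, hx, hxP, hxQ, fun a n u x' hx' ha haQ => ?_⟩
  have hle : Q.colon {single y k x} ≤ Q.colon {a • single y k x} := fun r hr => by
    rw [Submodule.mem_colon_singleton, smul_comm] at *
    exact Q.smul_mem a hr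
  by_contra hnot
  refine hmax _ ⟨n, u, x', hx', ?_, ?_, by rw [ha]⟩ (lt_of_le_not_ge hle hnot)
  · rw [mem_slice, ← ha]; exact P.smul_mem a hxP
  · rwa [mem_slice, ← ha]

theorem eventuallyLinearLeast_degreesBetween [Finite σ] [IsNoetherianRing R]
    (hA : ∀ i < 0, 𝒜 i = ⊥) (hy : ∀ j, y j ∈ 𝒜 (d j))
    {P : Submodule (MvPolynomial σ R) (ReesAmbient R M y)} [IsNoetherian (MvPolynomial σ R) P]
    (hP : IsBihomogeneous ℳ P) {Q : Submodule (MvPolynomial σ R) (ReesAmbient R M y)}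
    (hQP : Q ≤ P) (hQ : IsBihomogeneous ℳ Q) :
    EventuallyLinearLeast d (degreesBetween ℳ P Q) := by
  have map_comap {Q : Submodule (MvPolynomial σ R) (ReesAmbient R M y)} (h : Q ≤ P) :
      (Q.comap P.subtype).map P.subtype = Q := by
    rw [Submodule.map_comap_subtype, inf_eq_right.2 h]
  suffices H : ∀ Q' : Submodule (MvPolynomial σ R) P, IsBihomogeneous ℳ (Q'.map P.subtype) →
      EventuallyLinearLeast d (degreesBetween ℳ P (Q'.map P.subtype)) by
    have := H _ (by rwa [map_comap hQP])
    rwa [map_comap hQP] at this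
  intro Q'
  induction Q' using IsNoetherian.induction with | hgt Q' ih => ?_
  intro hQ'
  by_cases hPQ : P ≤ Q'.map P.subtype
  · exact .inl <| .of_forall fun n => Set.eq_empty_iff_forall_notMem.2
      fun u ⟨x, _, hxP, hxQ⟩ => hxQ (hPQ hxP)
  obtain ⟨k, v, x, hx, hxP, hxQ, hmax⟩ := exists_isMaximalColon hP hPQ
  set Q₁ := Q'.map P.subtype ⊔ Submodule.span (MvPolynomial σ R) {single y k x}
  have hQ₁P : Q₁ ≤ P := sup_le (Submodule.map_subtype_le _ _)
    (Submodule.span_le.2 (Set.singleton_subset_iff.2 hxP))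
  have hlt : Q' < Q₁.comap P.subtype := by
    rw [← Submodule.map_lt_map_iff_of_injective P.injective_subtype, map_comap hQ₁P]
    exact lt_of_le_of_ne le_sup_left fun h =>
      hxQ (h ▸ Submodule.mem_sup_right (Submodule.mem_span_singleton_self _))
  have h₁ := ih _ hlt (by rw [map_comap hQ₁P]; exact hQ'.sup_span_singleton hy hx)
  rw [map_comap hQ₁P] at h₁
  rw [funext (degreesBetween_eq_union le_sup_left hQ₁P)]
  exact h₁.union (eventuallyLinearLeast_sup_span_singleton hA hy hQ' hx hxQ hmax)

end NoetherianInduction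

section Saturation

variable {R M : Type*} [CommRing R] [AddCommGroup M] [Module R M]

/-- `(L :_M p)`. -/
def Submodule.moduleColon (L : Submodule R M) (p : Ideal R) : Submodule R M where
  carrier := {x | ∀ r ∈ p, r • x ∈ L}
  add_mem' hx hx' r hr := by rw [smul_add]; exact L.add_mem (hx r hr) (hx' r hr)
  zero_mem' r _ := by rw [smul_zero]; exact L.zero_mem
  smul_mem' a _ hx r hr := by rw [smul_comm]; exact L.smul_mem a (hx r hr)

lemma Submodule.smul_moduleColon_le_self (L : Submodule R M) (p : Ideal R) :
    p • L.moduleColon p ≤ L :=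
  Submodule.smul_le.2 fun r hr _ hx => hx r hr

lemma Submodule.smul_moduleColon_le {K : Ideal R} {L L' : Submodule R M} (h : K • L ≤ L')
    (p : Ideal R) : K • L.moduleColon p ≤ L'.moduleColon p :=
  Submodule.smul_le.2 fun a ha _ hx r hr => by
    rw [smul_comm]; exact h (Submodule.smul_mem_smul ha (hx r hr))

def Submodule.homogeneousSaturation (L : Submodule R M) {ι : Type*} [AddMonoid ι]
    (𝒜 : ι → AddSubgroup R) [SetLike.GradedMonoid 𝒜] {p : Ideal R} (hp : p.IsPrime) :
    Submodule R M where
  carrier := {x | ∃ s e, s ∈ 𝒜 e ∧ s ∉ p ∧ s • x ∈ L}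
  add_mem' := by
    rintro x x' ⟨s, e, hs, hsp, hsx⟩ ⟨s', e', hs', hsp', hsx'⟩
    refine ⟨s * s', e + e', SetLike.mul_mem_graded hs hs', fun h => ?_, ?_⟩
    · exact (hp.mem_or_mem h).elim hsp hsp'
    · rw [smul_add, mul_comm, mul_smul, mul_comm, mul_smul]
      exact L.add_mem (L.smul_mem _ hsx) (L.smul_mem _ hsx')
  zero_mem' := ⟨1, 0, SetLike.GradedOne.one_mem, (Ideal.ne_top_iff_one p).1 hp.ne_top, by
    rw [smul_zero]; exact L.zero_mem⟩
  smul_mem' a _ := fun ⟨s, e, hs, hsp, hsx⟩ =>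
    ⟨s, e, hs, hsp, by rw [smul_comm]; exact L.smul_mem a hsx⟩

lemma Submodule.smul_homogeneousSaturation_le {ι : Type*} [AddMonoid ι]
    {𝒜 : ι → AddSubgroup R} [SetLike.GradedMonoid 𝒜] {p : Ideal R} (hp : p.IsPrime)
    {K : Ideal R} {L L' : Submodule R M} (h : K • L ≤ L') :
    K • L.homogeneousSaturation 𝒜 hp ≤ L'.homogeneousSaturation 𝒜 hp :=
  Submodule.smul_le.2 fun a ha _ ⟨s, e, hs, hsp, hsx⟩ =>
    ⟨s, e, hs, hsp, by rw [smul_comm]; exact h (Submodule.smul_mem_smul ha hsx)⟩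

variable (𝒜 : ℤ → AddSubgroup R) (ℳ : ℤ → AddSubgroup M) [GradedRing 𝒜] [Decomposition ℳ]
  [SetLike.GradedSMul 𝒜 ℳ] {L : Submodule R M} {p : Ideal R}

lemma Submodule.IsHomogeneous.moduleColon (hL : L.IsHomogeneous ℳ) (hp : p.IsHomogeneous 𝒜) :
    (L.moduleColon p).IsHomogeneous ℳ := by
  intro u x hx r hr
  change r • gradedProj ℳ u x ∈ L
  rw [← sum_gradedProj 𝒜 r, Finset.sum_smul]
  refine L.sum_mem fun e _ => ?_
  rw [← gradedProj_smul_of_mem_left 𝒜 ℳ (gradedProj_mem 𝒜 e r)]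
  exact hL _ (hx _ (hp e hr))

lemma Submodule.IsHomogeneous.homogeneousSaturation (hL : L.IsHomogeneous ℳ)
    (hp : p.IsPrime) : (L.homogeneousSaturation 𝒜 hp).IsHomogeneous ℳ := by
  rintro u x ⟨s, e, hs, hsp, hsx⟩
  refine ⟨s, e, hs, hsp, ?_⟩
  change s • gradedProj ℳ u x ∈ L
  rw [← gradedProj_smul_of_mem_left 𝒜 ℳ hs]
  exact hL _ hsx

variable {𝒜 ℳ}

lemma forall_mem_iff_smul_mem_iff_mem_moduleColon (hL : L.IsHomogeneous ℳ) (hp : p.IsPrime)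
    (hp𝒜 : p.IsHomogeneous 𝒜) {u : ℤ} {x : M} (hx : x ∈ ℳ u) :
    (∀ r : R, r ∈ p ↔ r • x ∈ L) ↔
      x ∈ L.moduleColon p ∧ x ∉ L.homogeneousSaturation 𝒜 hp := by
  refine ⟨fun h => ⟨fun r hr => (h r).1 hr, fun ⟨s, _, _, hsp, hsx⟩ => hsp ((h s).2 hsx)⟩,
    fun ⟨hcolon, hsat⟩ r => ⟨hcolon r, fun hrx => ?_⟩⟩
  by_contra hr
  obtain ⟨e, he⟩ : ∃ e, gradedProj 𝒜 e r ∉ p := by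
    by_contra! h
    exact hr ((hp𝒜.mem_iff 𝒜).2 h)
  refine hsat ⟨_, e, gradedProj_mem 𝒜 e r, he, ?_⟩
  rw [← gradedProj_smul_of_mem_right 𝒜 ℳ hx]
  exact hL _ hrx

lemma exists_homogeneous_of_forall_mem_iff (hL : L.IsHomogeneous ℳ) (hp : p.IsPrime)
    (hp𝒜 : p.IsHomogeneous 𝒜) {x : M} (hx : ∀ r : R, r ∈ p ↔ r • x ∈ L) :
    ∃ u, ∃ x' ∈ ℳ u, ∀ r : R, r ∈ p ↔ r • x' ∈ L := by
  have hcolon : x ∈ L.moduleColon p := fun r hr => (hx r).1 hr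
  have hsat : x ∉ L.homogeneousSaturation 𝒜 hp := fun ⟨s, _, _, hsp, hsx⟩ => hsp ((hx s).2 hsx)
  obtain ⟨u, hu⟩ : ∃ u, gradedProj ℳ u x ∉ L.homogeneousSaturation 𝒜 hp := by
    by_contra! h
    exact hsat (((hL.homogeneousSaturation 𝒜 ℳ hp).mem_iff ℳ).2 h)
  exact ⟨u, _, gradedProj_mem ℳ u x, (forall_mem_iff_smul_mem_iff_mem_moduleColon hL hp hp𝒜
    (gradedProj_mem ℳ u x)).2 ⟨(hL.moduleColon 𝒜 ℳ hp𝒜) u hcolon, hu⟩⟩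

end Saturation

lemma Ideal.mul_pow_eq_pow_succ_of_le {R : Type*} [CommSemiring R] {I J : Ideal R} {m n : ℕ}
    (h : J * I ^ m = I ^ (m + 1)) (hmn : m ≤ n) : J * I ^ n = I ^ (n + 1) := by
  induction n, hmn using Nat.le_induction with
  | base => exact h
  | succ n _ ih => rw [pow_succ, ← mul_assoc, ih, ← pow_succ]

section Associated

variable {σ R M : Type*} [CommRing R] [AddCommGroup M] [Module R M]
  {𝒜 : ℤ → AddSubgroup R} {ℳ : ℤ → AddSubgroup M} [GradedRing 𝒜] [Decomposition ℳ]
  [SetLike.GradedSMul 𝒜 ℳ] {y : σ → R} {d : σ → ℤ}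

theorem eventuallyLinearLeast_degrees_forall_mem_iff_smul_mem [Finite σ] [IsNoetherianRing R]
    (hA : ∀ i < 0, 𝒜 i = ⊥) (hy : ∀ j, y j ∈ 𝒜 (d j)) {p : Ideal R} (hp : p.IsPrime)
    (hp𝒜 : p.IsHomogeneous 𝒜) (hfaith : ∀ x : M, (∀ r ∈ p, r • x = 0) → x = 0)
    {L : ℕ → Submodule R M} (hLh : ∀ n, (L n).IsHomogeneous ℳ)
    (hL : ∀ n, Ideal.span (Set.range y) • L n ≤ L (n + 1)) (hLfg : (familySubmodule y L hL).FG) :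
    EventuallyLinearLeast d fun n => {u | ∃ x ∈ ℳ u, ∀ r : R, r ∈ p ↔ r • x ∈ L n} := by
  let P := familySubmodule y (fun n => (L n).moduleColon p)
    fun n => Submodule.smul_moduleColon_le (hL n) p
  let S := familySubmodule y (fun n => (L n).homogeneousSaturation 𝒜 hp)
    fun n => Submodule.smul_homogeneousSaturation_le hp (hL n)
  have : IsNoetherian (MvPolynomial σ R) P := isNoetherian_familySubmodule _ hL hLfg
    (fun n => (L n).smul_moduleColon_le_self p) hfaith
  have hP : IsBihomogeneous ℳ P :=
    isBihomogeneous_familySubmodule fun n => (hLh n).moduleColon 𝒜 ℳ hp𝒜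
  have hS : IsBihomogeneous ℳ S :=
    isBihomogeneous_familySubmodule fun n => (hLh n).homogeneousSaturation 𝒜 ℳ hp
  convert eventuallyLinearLeast_degreesBetween hA hy hP inf_le_left (hP.inf hS) using 2 with n
  ext u
  refine exists_congr fun x => and_congr_right fun hx => ?_
  rw [forall_mem_iff_smul_mem_iff_mem_moduleColon (hLh n) hp hp𝒜 hx]
  change _ ↔ x ∈ slice y P n ∧ ¬(x ∈ slice y P n ∧ x ∈ slice y S n)
  simp only [P, S, slice_familySubmodule]
  tauto

end Associated

theorem v_number_at_prime_of_M_mod_InN_eventually_linear_general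
    {R M : Type*} [CommRing R] [IsNoetherianRing R]
    [AddCommGroup M] [Module R M] [Module.Finite R M]
    (𝒜 : ℤ → AddSubgroup R) (ℳ : ℤ → AddSubgroup M)
    [GradedRing 𝒜] [DirectSum.Decomposition ℳ]
    (hsmul : ∀ (i j : ℤ), ∀ r ∈ 𝒜 i, ∀ x ∈ ℳ j, r • x ∈ ℳ (i + j))
    (hA : ∀ i : ℤ, i < 0 → 𝒜 i = ⊥)
    (I : Ideal R) (hI : Ideal.IsHomogeneous 𝒜 I)
    (N : Submodule R M) (hN : ∀ x ∈ N, ∀ i : ℤ, (DirectSum.decompose ℳ x i : M) ∈ N)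
    (c : ℕ) (y : Fin c → R) (d : Fin c → ℤ)
    (hy : ∀ j, y j ∈ 𝒜 (d j))
    (J : Ideal R) (hJgen : J = Ideal.span (Set.range y)) (hJI : J ≤ I)
    (m0 : ℕ) (hred : J * I ^ m0 = I ^ (m0 + 1))
    (h0 : ∀ x : M, (∀ r ∈ I, r • x = 0) → x = 0)
    (p : Ideal R) (hp : p.IsPrime) (hIp : I ≤ p)
    (hass : ∃ n₀ : ℕ, ∀ n ≥ n₀, ∃ x : M,
      ∀ r : R, r ∈ p ↔ r • x ∈ (I ^ n • N : Submodule R M)) :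
    ∃ j : Fin c, ∃ b : ℤ, ∃ n₁ : ℕ, ∀ n ≥ n₁,
      sInf {u : ℤ | ∃ x ∈ ℳ u,
        ∀ r : R, r ∈ p ↔ r • x ∈ (I ^ n • N : Submodule R M)} = d j * (n : ℤ) + b := by
  subst hJgen
  obtain ⟨n₀, hass⟩ := hass
  have : SetLike.GradedSMul 𝒜 ℳ := ⟨fun i j _ _ hr hx => hsmul i j _ hr _ hx⟩
  have hL (n : ℕ) : (I ^ n • N).IsHomogeneous ℳ :=
    Submodule.IsHomogeneous.pow_smul 𝒜 ℳ hI (fun i x hx => hN x hx i) n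
  have hJL (n : ℕ) : Ideal.span (Set.range y) • (I ^ n • N) ≤ I ^ (n + 1) • N := by
    rw [pow_succ', Submodule.mul_smul]
    exact Submodule.smul_mono hJI le_rfl
  have hfg := fg_familySubmodule hJL m0 fun n hn => by
    rw [← Ideal.mul_pow_eq_pow_succ_of_le hred hn, Submodule.mul_smul]
  obtain ⟨x₀, hx₀⟩ := hass n₀ le_rfl
  have hp𝒜 := Ideal.IsHomogeneous.of_isPrime_of_forall_mem_iff 𝒜 ℳ (hL n₀) hp hx₀
  rcases eventuallyLinearLeast_degrees_forall_mem_iff_smul_mem hA hy hp hp𝒜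
    (fun x hx => h0 x fun r hr => hx r (hIp hr)) hL hJL hfg with hempty | ⟨j, b, hlin⟩
  · obtain ⟨n, hempty, hn⟩ := (hempty.and (eventually_ge_atTop n₀)).exists
    obtain ⟨u, hu⟩ := exists_homogeneous_of_forall_mem_iff (hL n) hp hp𝒜 (hass n hn).choose_spec
    exact (Set.eq_empty_iff_forall_notMem.1 hempty u hu).elim
  · obtain ⟨n₁, hlin⟩ := eventually_atTop.1 hlin
    exact ⟨j, b, n₁, fun n hn => (hlin n hn).csInf_eq⟩

/-- Same setup as Statement 9.  Assume `(0 :_M I) = 0` and let `p` be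
a prime ideal with `I ⊆ p` and `p ∈ Ass_R(M / I^n N)` for all sufficiently large `n`.
Then there are `a ∈ {d 1, …, d c}` and `b ∈ ℤ` such that `v_p(M / I^n N) = a * n + b` for
all sufficiently large `n`, where `v_p(M / I^n N)` is the least degree of a homogeneous
`x ∈ M` with `p = (I^n N :_R x)`. -/
theorem v_number_at_prime_of_M_mod_InN_eventually_linear
    {R M : Type*} [CommRing R] [IsNoetherianRing R]
    [AddCommGroup M] [Module R M] [Module.Finite R M]
    (𝒜 : ℤ → AddSubgroup R) (ℳ : ℤ → AddSubgroup M)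
    [GradedRing 𝒜] [DirectSum.Decomposition ℳ]
    (hsmul : ∀ (i j : ℤ), ∀ r ∈ 𝒜 i, ∀ x ∈ ℳ j, r • x ∈ ℳ (i + j))
    (hA : ∀ i : ℤ, i < 0 → 𝒜 i = ⊥)
    (I : Ideal R) (hI : Ideal.IsHomogeneous 𝒜 I)
    (N : Submodule R M) (hN : ∀ x ∈ N, ∀ i : ℤ, (DirectSum.decompose ℳ x i : M) ∈ N)
    (c : ℕ) (y : Fin c → R) (d : Fin c → ℤ) (hdmono : Monotone d)
    (hy : ∀ j, y j ∈ 𝒜 (d j))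
    (J : Ideal R) (hJgen : J = Ideal.span (Set.range y)) (hJI : J ≤ I)
    (m0 : ℕ) (hred : J * I ^ m0 = I ^ (m0 + 1))
    (h0 : ∀ x : M, (∀ r ∈ I, r • x = 0) → x = 0)
    (p : Ideal R) (hp : p.IsPrime) (hIp : I ≤ p)
    (hass : ∃ n₀ : ℕ, ∀ n ≥ n₀, ∃ x : M,
      ∀ r : R, r ∈ p ↔ r • x ∈ (I ^ n • N : Submodule R M)) :
    ∃ j : Fin c, ∃ b : ℤ, ∃ n₁ : ℕ, ∀ n ≥ n₁,
      sInf {u : ℤ | ∃ x ∈ ℳ u,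
        ∀ r : R, r ∈ p ↔ r • x ∈ (I ^ n • N : Submodule R M)} = d j * (n : ℤ) + b :=
  v_number_at_prime_of_M_mod_InN_eventually_linear_general 𝒜 ℳ hsmul hA I hI N hN c y d hy J hJgen
    hJI m0 hred h0 p hp hIp hass
end

section
/- Assume (0 :_M I) = 0, and assume Ass_R(I^n M / I^{n+1} N) = Ass_R(M / I^{n+1} N) for all sufficiently large n. Let p be a prime ideal of R with I ⊆ p and p ∈ Ass_R(M / I^n N) for all sufficiently large n. Then v_p(I^n M / I^{n+1} N) = v_p(M / I^{n+1} N) for all sufficiently large n. -/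
/-!
If `(0 :_M I) = 0`, then `(I^(n+1) M :_M I) = I^n M` for all large `n`. Indeed, for generators
`a₁, …, aₛ` of `I` the map `x ↦ (aᵢ x)ᵢ` embeds `M` into `Mˢ` and pulls `I^k Mˢ` back to
`(I^k M :_M I)`, so the Artin–Rees lemma for the image of `M` gives
`(I^(n+1) M :_M I) = I · (I^n M :_M I) ⊆ I^n M`. Now if `p ⊇ I` is the annihilator of `x` modulo
`I^(n+1) N`, then `I x ⊆ I^(n+1) N ⊆ I^(n+1) M`, so `x ∈ I^n M` automatically: both sets whose
infima define the two `v`-numbers coincide.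
-/

open Submodule

namespace Submodule

variable {R M : Type*} [CommRing R] [AddCommGroup M] [Module R M]

/-- The module colon `(L :_M I) = {x | I x ⊆ L}`. -/
def moduleColon_s15 (L : Submodule R M) (I : Ideal R) : Submodule R M :=
  ⨅ r ∈ I, L.comap (r • LinearMap.id)

theorem mem_moduleColon {L : Submodule R M} {I : Ideal R} {x : M} :
    x ∈ L.moduleColon_s15 I ↔ ∀ r ∈ I, r • x ∈ L := by
  simp [moduleColon_s15]

theorem mem_moduleColon_span {L : Submodule R M} {s : Set R} {x : M} :
    x ∈ L.moduleColon_s15 (Ideal.span s) ↔ ∀ a ∈ s, a • x ∈ L := by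
  simp_rw [mem_moduleColon, ← mem_colon_singleton (N := L)]
  exact Ideal.span_le

theorem smul_moduleColon_le_s15 (L : Submodule R M) (I : Ideal R) : I • L.moduleColon_s15 I ≤ L :=
  smul_le.mpr fun _ hr _ hx => mem_moduleColon.mp hx _ hr

theorem pi_univ_smul_top {ι : Type*} [Finite ι] (J : Ideal R) :
    pi Set.univ (fun _ : ι => (J • ⊤ : Submodule R M)) = J • ⊤ := by
  classical
  apply le_antisymm
  · rw [← iSup_map_single]
    refine iSup_le fun i => ?_
    rw [map_smul'']
    exact smul_mono le_rfl le_top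
  · exact smul_le.mpr fun r hr v _ => mem_pi.mpr fun i _ => smul_mem_smul hr mem_top

end Submodule

section SmulFamily

variable {R M : Type*} [CommRing R] [AddCommGroup M] [Module R M]

def smulFamily (s : Set R) : M →ₗ[R] (s → M) :=
  LinearMap.pi fun a => LinearMap.lsmul R M a

theorem comap_smulFamily_pi (s : Set R) (L : Submodule R M) :
    (pi Set.univ fun _ : s => L).comap (smulFamily s) = L.moduleColon_s15 (Ideal.span s) := by
  ext x
  simp [smulFamily, mem_moduleColon_span]

theorem smulFamily_injective {s : Set R}
    (h0 : (⊥ : Submodule R M).moduleColon_s15 (Ideal.span s) = ⊥) :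
    Function.Injective (smulFamily (M := M) s) := by
  rw [← LinearMap.ker_eq_bot, ← h0, ← comap_smulFamily_pi, LinearMap.ker, pi_univ_bot]

end SmulFamily

section ArtinRees

variable {R M P : Type*} [CommRing R] [IsNoetherianRing R]
  [AddCommGroup M] [Module R M] [AddCommGroup P] [Module R P] [Module.Finite R P]

theorem Ideal.exists_pow_succ_smul_top_inf_eq (I : Ideal R) (N : Submodule R P) :
    ∃ k : ℕ, ∀ n ≥ k, (I ^ (n + 1) • ⊤ : Submodule R P) ⊓ N = I • (I ^ n • ⊤ ⊓ N) := by
  obtain ⟨k, hk⟩ := (I.stableFiltration_stable ⊤).inter_right (I.trivialFiltration N)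
  exact ⟨k, fun n hn => (hk n hn).symm⟩

theorem exists_comap_pow_succ_smul_top_eq (I : Ideal R) {f : M →ₗ[R] P}
    (hf : Function.Injective f) :
    ∃ k : ℕ, ∀ n ≥ k,
      (I ^ (n + 1) • ⊤ : Submodule R P).comap f = I • (I ^ n • ⊤ : Submodule R P).comap f := by
  obtain ⟨k, hk⟩ := Ideal.exists_pow_succ_smul_top_inf_eq I (LinearMap.range f)
  refine ⟨k, fun n hn => ?_⟩
  calc (I ^ (n + 1) • ⊤ : Submodule R P).comap f
      = (I ^ (n + 1) • ⊤ ⊓ LinearMap.range f).comap f := by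
        ext x
        simp
    _ = ((I • (I ^ n • ⊤ : Submodule R P).comap f).map f).comap f := by
        rw [hk n hn, map_smul'', map_comap_eq, inf_comm]
    _ = I • (I ^ n • ⊤ : Submodule R P).comap f := comap_map_eq_of_injective hf _

end ArtinRees

theorem exists_moduleColon_pow_succ_smul_top_le {R M : Type*} [CommRing R] [IsNoetherianRing R]
    [AddCommGroup M] [Module R M] [Module.Finite R M] (I : Ideal R)
    (h0 : (⊥ : Submodule R M).moduleColon_s15 I = ⊥) :
    ∃ n₀ : ℕ, ∀ n ≥ n₀,
      (I ^ (n + 1) • ⊤ : Submodule R M).moduleColon_s15 I ≤ I ^ n • ⊤ := by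
  obtain ⟨s, rfl⟩ : ∃ s : Finset R, Ideal.span (s : Set R) = I := IsNoetherian.noetherian I
  have hcomap (k : ℕ) : (Ideal.span (s : Set R) ^ k • ⊤ : Submodule R (↥(s : Set R) → M)).comap
      (smulFamily (s : Set R)) = (Ideal.span (s : Set R) ^ k • ⊤ : Submodule R M).moduleColon_s15
        (Ideal.span s) := by
    rw [← pi_univ_smul_top, comap_smulFamily_pi]
  obtain ⟨n₀, hn₀⟩ := exists_comap_pow_succ_smul_top_eq (Ideal.span (s : Set R))
    (smulFamily_injective h0)
  refine ⟨n₀, fun n hn => ?_⟩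
  rw [← hcomap, hn₀ n hn, hcomap]
  exact smul_moduleColon_le_s15 _ _

theorem v_number_at_prime_of_InM_eq_v_number_of_M_general
    {R M : Type*} [CommRing R] [IsNoetherianRing R]
    [AddCommGroup M] [Module R M] [Module.Finite R M]
    (ℳ : ℤ → AddSubgroup M)
    (I : Ideal R)
    (N : Submodule R M)
    (h0 : ∀ x : M, (∀ r ∈ I, r • x = 0) → x = 0)
    (p : Ideal R) (hIp : I ≤ p) :
    ∃ n₁ : ℕ, ∀ n ≥ n₁,
      sInf {u : ℤ | ∃ x ∈ ℳ u, x ∈ (I ^ n • ⊤ : Submodule R M) ∧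
          ∀ r : R, r ∈ p ↔ r • x ∈ (I ^ (n + 1) • N : Submodule R M)}
        = sInf {u : ℤ | ∃ x ∈ ℳ u,
            ∀ r : R, r ∈ p ↔ r • x ∈ (I ^ (n + 1) • N : Submodule R M)} := by
  obtain ⟨n₀, hn₀⟩ := exists_moduleColon_pow_succ_smul_top_le I
    (eq_bot_iff.mpr fun x hx => h0 x (mem_moduleColon.mp hx))
  refine ⟨n₀, fun n hn => congrArg sInf (Set.ext fun u => ?_)⟩
  refine ⟨fun ⟨x, hxu, _, hxp⟩ => ⟨x, hxu, hxp⟩, fun ⟨x, hxu, hxp⟩ => ⟨x, hxu, ?_, hxp⟩⟩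
  exact hn₀ n hn <| mem_moduleColon.mpr fun r hr =>
    smul_mono le_rfl le_top ((hxp r).mp (hIp hr))

/-- Same setup as Statement 9.  Assume `(0 :_M I) = 0`, assume
`Ass_R(I^n M / I^(n+1) N) = Ass_R(M / I^(n+1) N)` for all sufficiently large `n`, and let
`p` be a prime ideal with `I ⊆ p` and `p ∈ Ass_R(M / I^n N)` for all sufficiently large
`n`.  Then `v_p(I^n M / I^(n+1) N) = v_p(M / I^(n+1) N)` for all sufficiently large `n`. -/
theorem v_number_at_prime_of_InM_eq_v_number_of_M
    {R M : Type*} [CommRing R] [IsNoetherianRing R]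
    [AddCommGroup M] [Module R M] [Module.Finite R M]
    (𝒜 : ℤ → AddSubgroup R) (ℳ : ℤ → AddSubgroup M)
    [GradedRing 𝒜] [DirectSum.Decomposition ℳ]
    (hsmul : ∀ (i j : ℤ), ∀ r ∈ 𝒜 i, ∀ x ∈ ℳ j, r • x ∈ ℳ (i + j))
    (hA : ∀ i : ℤ, i < 0 → 𝒜 i = ⊥)
    (I : Ideal R) (hI : Ideal.IsHomogeneous 𝒜 I)
    (N : Submodule R M) (hN : ∀ x ∈ N, ∀ i : ℤ, (DirectSum.decompose ℳ x i : M) ∈ N)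
    (c : ℕ) (y : Fin c → R) (d : Fin c → ℤ) (hdmono : Monotone d)
    (hy : ∀ j, y j ∈ 𝒜 (d j))
    (J : Ideal R) (hJgen : J = Ideal.span (Set.range y)) (hJI : J ≤ I)
    (m0 : ℕ) (hred : J * I ^ m0 = I ^ (m0 + 1))
    (h0 : ∀ x : M, (∀ r ∈ I, r • x = 0) → x = 0)
    (hasseq : ∃ n₀ : ℕ, ∀ n ≥ n₀,
      {q : Ideal R | q.IsPrime ∧ ∃ x ∈ (I ^ n • ⊤ : Submodule R M),
          ∀ r : R, r ∈ q ↔ r • x ∈ (I ^ (n + 1) • N : Submodule R M)}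
        = {q : Ideal R | q.IsPrime ∧ ∃ x : M,
            ∀ r : R, r ∈ q ↔ r • x ∈ (I ^ (n + 1) • N : Submodule R M)})
    (p : Ideal R) (hp : p.IsPrime) (hIp : I ≤ p)
    (hass : ∃ n₀ : ℕ, ∀ n ≥ n₀, ∃ x : M,
      ∀ r : R, r ∈ p ↔ r • x ∈ (I ^ n • N : Submodule R M)) :
    ∃ n₁ : ℕ, ∀ n ≥ n₁,
      sInf {u : ℤ | ∃ x ∈ ℳ u, x ∈ (I ^ n • ⊤ : Submodule R M) ∧
          ∀ r : R, r ∈ p ↔ r • x ∈ (I ^ (n + 1) • N : Submodule R M)}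
        = sInf {u : ℤ | ∃ x ∈ ℳ u,
            ∀ r : R, r ∈ p ↔ r • x ∈ (I ^ (n + 1) • N : Submodule R M)} :=
  v_number_at_prime_of_InM_eq_v_number_of_M_general ℳ I N h0 p hIp
end
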